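/- arXiv:2409.14933 — 3 statements merged into one kernel-verified Lean document; each statement's English description precedes it below -/
import Mathlib

section
/- With notation as in the context, M_λ = M[ker λ]; that is, e·M ∩ M = {m ∈ M : (ker λ)·m = 0}. -/
/-!
The idempotent `e` kills `ker λ_E`: for `x ∈ ker λ_E` the product `e x` lies in every prime
of `T_E` (in `ker λ_E` because `x` does, in the others because `e` does), hence is nilpotent,
hence zero since `T_E` is reduced. So `t · e m' = 0` for `t ∈ ker λ`, and `M ⊆ M_E` gives
`M_λ ⊆ M[ker λ]`. Conversely, write `1 - e = t / s` with `t ∈ T`; then `λ t = 0`, so `t`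
kills `M[ker λ]`, and `s` is invertible on `M_E`, so `(1 - e) m = 0`, i.e. `m = e m`.
-/

open scoped nonZeroDivisors

theorem IsLocalization.isReduced {R : Type*} [CommRing R] [IsReduced R] (S : Submonoid R)
    (A : Type*) [CommRing A] [Algebra R A] [IsLocalization S A] : IsReduced A :=
  let φ := IsLocalization.algEquiv S A (Localization S)
  isReduced_of_injective φ φ.injective

theorem IsLocalizedModule.injective_of_isTorsionFree {R M M' : Type*} [CommRing R]
    [AddCommGroup M] [Module R M] [Module.IsTorsionFree R M] [AddCommGroup M'] [Module R M']
    (f : M →ₗ[R] M') [IsLocalizedModule R⁰ f] : Function.Injective f :=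
  (IsLocalizedModule.injective_iff_isRegular R⁰ f).mpr fun c ↦
    Module.IsTorsionFree.isSMulRegular (isRegular_iff_mem_nonZeroDivisors.mpr c.2)

theorem Ideal.mul_eq_zero_of_forall_isPrime_ne {A : Type*} [CommRing A] [IsReduced A]
    {I : Ideal A} {e x : A} (he : ∀ P : Ideal A, P.IsPrime → P ≠ I → e ∈ P)
    (hx : x ∈ I) : e * x = 0 :=
  IsNilpotent.eq_zero <| nilpotent_iff_mem_prime.mpr fun P hP ↦ by
    by_cases hPI : P = I
    · exact P.mul_mem_left e (hPI ▸ hx)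
    · exact P.mul_mem_right x (he P hP hPI)

theorem statement2_general
    {O : Type*} [CommRing O]
    {E : Type*} [Field E] [Algebra O E] [IsFractionRing O E]
    {T : Type*} [CommRing T] [IsReduced T] [Algebra O T]
    (lam : T →ₐ[O] O)
    {TE : Type*} [CommRing TE] [Algebra T TE] [Algebra E TE]
    [IsLocalization (Algebra.algebraMapSubmonoid T (nonZeroDivisors O)) TE]
    (lamE : TE →ₐ[E] E) (e : TE)
    (hlamE : ∀ t : T, lamE (algebraMap T TE t) = algebraMap O E (lam t))
    (he1 : lamE e = 1)
    (he2 : ∀ P : Ideal TE, P.IsPrime → P ≠ RingHom.ker lamE → e ∈ P)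
    {M : Type*} [AddCommGroup M] [Module O M] [Module T M] [Module.Free O M]
    {ME : Type*} [AddCommGroup ME] [Module O ME] [Module TE ME]
    (iota : M →ₗ[O] ME) [IsLocalizedModule (nonZeroDivisors O) iota]
    (hiota : ∀ (t : T) (m : M), iota (t • m) = algebraMap T TE t • iota m) :
    ∀ m : M, (∃ m' : M, iota m = e • iota m') ↔ (∀ t : T, lam t = 0 → t • m = 0) := by
  intro m
  have : IsReduced TE := IsLocalization.isReduced (Algebra.algebraMapSubmonoid T O⁰) TE
  have hiota_inj := IsLocalizedModule.injective_of_isTorsionFree iota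
  constructor
  · rintro ⟨m', hm'⟩ t ht
    have hte : e * algebraMap T TE t = 0 :=
      Ideal.mul_eq_zero_of_forall_isPrime_ne he2 (by rw [RingHom.mem_ker, hlamE, ht, map_zero])
    apply hiota_inj
    rw [hiota, hm', smul_smul, mul_comm, hte, zero_smul, map_zero]
  · intro h
    refine ⟨m, ?_⟩
    obtain ⟨⟨t, s⟩, hts⟩ := IsLocalization.surj (Algebra.algebraMapSubmonoid T O⁰) (1 - e)
    have hlam : lam t = 0 := by
      have h0 := congrArg lamE hts
      rw [map_mul, map_sub, map_one, he1, sub_self, zero_mul, hlamE] at h0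
      exact (map_eq_zero_iff _ (IsFractionRing.injective O E)).mp h0.symm
    have hs : algebraMap T TE s • (1 - e) • iota m = 0 := by
      rw [smul_smul, mul_comm, hts, ← hiota, h t hlam, map_zero]
    rwa [(IsLocalization.map_units TE s).smul_eq_zero, sub_smul, one_smul, sub_eq_zero] at hs

/-- With `𝒪` a complete DVR with fraction field `E`, `T` a commutative
reduced finite flat local `𝒪`-algebra, `λ : T → 𝒪` an `𝒪`-algebra homomorphism,
`T_E = T ⊗_𝒪 E` (axiomatised as the localization of `T` at the image of `𝒪 ∖ {0}`),
`e ∈ T_E` the idempotent attached to `λ` (characterised by `λ_E e = 1` and `e` lying in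
every prime of `T_E` other than `ker λ_E`), and `M` a finitely generated `T`-module that
is free as an `𝒪`-module, sitting inside `M_E = M ⊗_𝒪 E` via `ι`:
`M_λ = M[ker λ]`, i.e. `e·M ∩ M = {m ∈ M : (ker λ)·m = 0}`. -/
theorem statement2
    {O : Type*} [CommRing O] [IsDomain O] [IsDiscreteValuationRing O]
    [IsAdicComplete (IsLocalRing.maximalIdeal O) O]
    {E : Type*} [Field E] [Algebra O E] [IsFractionRing O E]
    {T : Type*} [CommRing T] [IsReduced T] [IsLocalRing T]
    [Algebra O T] [Module.Finite O T] [Module.Flat O T]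
    (lam : T →ₐ[O] O)
    {TE : Type*} [CommRing TE] [Algebra T TE] [Algebra O TE] [Algebra E TE]
    [IsScalarTower O T TE] [IsScalarTower O E TE]
    [IsLocalization (Algebra.algebraMapSubmonoid T (nonZeroDivisors O)) TE]
    (lamE : TE →ₐ[E] E) (e : TE)
    (hlamE : ∀ t : T, lamE (algebraMap T TE t) = algebraMap O E (lam t))
    (he1 : lamE e = 1)
    (he2 : ∀ P : Ideal TE, P.IsPrime → P ≠ RingHom.ker lamE → e ∈ P)
    {M : Type*} [AddCommGroup M] [Module O M] [Module T M] [IsScalarTower O T M]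
    [Module.Finite T M] [Module.Free O M]
    {ME : Type*} [AddCommGroup ME] [Module O ME] [Module TE ME] [IsScalarTower O TE ME]
    (iota : M →ₗ[O] ME) [IsLocalizedModule (nonZeroDivisors O) iota]
    (hiota : ∀ (t : T) (m : M), iota (t • m) = algebraMap T TE t • iota m) :
    ∀ m : M, (∃ m' : M, iota m = e • iota m') ↔ (∀ t : T, lam t = 0 → t • m = 0) :=
  statement2_general lam lamE e hlamE he1 he2 iota hiota
end

section
/- With notation as in the context, the pairing [·,·] induces a well-defined perfect 𝒪-bilinear pairing C_0^λ(M₁) × C_0^{λ̃}(M₂) → E/𝒪, given on classes by (e·m₁ mod (eM₁ ∩ M₁), ẽ·m₂ mod (ẽM₂ ∩ M₂)) ↦ [e·m₁, ẽ·m₂] mod 𝒪; consequently η_λ(M₁) = η_{λ̃}(M₂). -/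
/-- The 0-th Fitting ideal of a module `N` over a commutative ring `R`. -/
def fittingIdeal (R : Type*) [CommRing R] (N : Type*) [AddCommGroup N] [Module R N] :
    Ideal R :=
  Ideal.span { r : R | ∃ (n : ℕ) (π : (Fin n → R) →ₗ[R] N) (_ : Function.Surjective π)
    (A : Matrix (Fin n) (Fin n) R), (∀ j, π (fun i => A i j) = 0) ∧ r = A.det }

/-- The `𝒪`-submodule `e·M` of `M_E`. -/
noncomputable def eMsub {O TE M ME : Type*} [CommRing O] [CommRing TE] [Algebra O TE]
    [AddCommGroup M] [Module O M] [AddCommGroup ME] [Module O ME] [Module TE ME]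
    [IsScalarTower O TE ME] (e : TE) (iota : M →ₗ[O] ME) : Submodule O ME :=
  Submodule.span O {x : ME | ∃ m : M, x = e • iota m}

/-- The congruence module `C₀^λ(M) = e·M/(e·M ∩ M)`, formed inside `M_E`. -/
noncomputable abbrev C0M {O TE M ME : Type*} [CommRing O] [CommRing TE] [Algebra O TE]
    [AddCommGroup M] [Module O M] [AddCommGroup ME] [Module O ME] [Module TE ME]
    [IsScalarTower O TE ME] (e : TE) (iota : M →ₗ[O] ME) :=
  ↥(eMsub e iota) ⧸
    (Submodule.comap (eMsub e iota).subtype (eMsub e iota ⊓ LinearMap.range iota))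

/-- The class of `e·m` in `C₀^λ(M)`. -/
noncomputable def clsM {O TE M ME : Type*} [CommRing O] [CommRing TE] [Algebra O TE]
    [AddCommGroup M] [Module O M] [AddCommGroup ME] [Module O ME] [Module TE ME]
    [IsScalarTower O TE ME] (e : TE) (iota : M →ₗ[O] ME) (m : M) : C0M e iota :=
  Submodule.Quotient.mk ⟨e • iota m, Submodule.subset_span ⟨m, rfl⟩⟩


/-!
The orthogonality relations give `[e m₁, ẽ m₂] = [e m₁, m₂] = [m₁, ẽ m₂]`, so the pairing of
`e M₁` with `ẽ M₂` is integral as soon as one argument lies in `M₁` resp. `M₂`: it descends to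
the congruence modules. By perfectness of `[·,·]`, an element of `e M₁` pairing integrally with
all of `ẽ M₂` lies in `M₁`, so the induced pairing is injective on both sides. The congruence
modules are finitely generated torsion modules over the DVR `𝒪`, hence of finite length and
(non-canonically) isomorphic to their duals `Hom(-, E/𝒪)`. Thus
`C₀(M₁) ↪ C₀(M₂)^∨ ≅ C₀(M₂) ↪ C₀(M₁)^∨ ≅ C₀(M₁)` is an injective endomorphism of a module of
finite length, hence bijective, and so are both injections; in particular `C₀(M₁) ≅ C₀(M₂)`,
which gives the equality of Fitting ideals.
-/

section TorsionDuality

variable {R : Type*} [CommRing R] {K : Type*} [Field K] [Algebra R K]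

variable (K) in
noncomputable def divMod (a : R) :
    (R ⧸ R ∙ a) →ₗ[R] K ⧸ LinearMap.range (Algebra.linearMap R K) :=
  (R ∙ a).liftQ
    ((LinearMap.range (Algebra.linearMap R K)).mkQ ∘ₗ
      LinearMap.toSpanSingleton R K (algebraMap R K a)⁻¹)
    (by
      rw [Submodule.span_singleton_le_iff_mem, LinearMap.mem_ker, LinearMap.comp_apply,
        Submodule.mkQ_apply, Submodule.Quotient.mk_eq_zero, LinearMap.toSpanSingleton_apply,
        Algebra.smul_def]
      rcases eq_or_ne (algebraMap R K a) 0 with h | h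
      · exact ⟨0, by simp [h]⟩
      · exact ⟨1, by simp [h]⟩)

lemma divMod_mk (a u : R) :
    divMod K a (Submodule.Quotient.mk u) =
      Submodule.Quotient.mk (algebraMap R K u * (algebraMap R K a)⁻¹) := by
  rw [← Algebra.smul_def]
  rfl

variable [IsFractionRing R K]

lemma smul_divMod_eq_zero_iff {a : R} (ha : a ≠ 0) (r : R) :
    r • divMod K a = 0 ↔ r ∈ R ∙ a := by
  have ha' : algebraMap R K a ≠ 0 := (map_ne_zero_iff _ (IsFractionRing.injective R K)).2 ha
  rw [Submodule.linearMap_qext_iff, LinearMap.ext_ring_iff]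
  simp only [LinearMap.comp_apply, Submodule.mkQ_apply, LinearMap.smul_apply, divMod_mk,
    LinearMap.zero_apply, map_one, one_mul, ← Submodule.Quotient.mk_smul,
    Submodule.Quotient.mk_eq_zero, Submodule.mem_span_singleton, LinearMap.mem_range,
    Algebra.linearMap_apply, Algebra.smul_def, Algebra.algebraMap_self, RingHom.id_apply]
  refine exists_congr fun c => ?_
  rw [eq_mul_inv_iff_mul_eq₀ ha', ← map_mul, (IsFractionRing.injective R K).eq_iff]

lemma exists_eq_smul_divMod {a : R} (ha : a ≠ 0)
    (f : (R ⧸ R ∙ a) →ₗ[R] K ⧸ LinearMap.range (Algebra.linearMap R K)) :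
    ∃ c : R, c • divMod K a = f := by
  obtain ⟨t, ht⟩ := Submodule.Quotient.mk_surjective _ (f (Submodule.Quotient.mk 1))
  have : a • f (Submodule.Quotient.mk 1) = 0 := by
    rw [← map_smul, ← Submodule.Quotient.mk_smul, smul_eq_mul, mul_one,
      (Submodule.Quotient.mk_eq_zero _).2 (Submodule.mem_span_singleton_self a), map_zero]
  rw [← ht, ← Submodule.Quotient.mk_smul, Submodule.Quotient.mk_eq_zero] at this
  obtain ⟨c, hc⟩ := this
  refine ⟨c, Submodule.linearMap_qext _ (LinearMap.ext_ring ?_)⟩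
  rw [LinearMap.comp_apply, LinearMap.comp_apply, Submodule.mkQ_apply, ← ht, LinearMap.smul_apply,
    divMod_mk, ← Submodule.Quotient.mk_smul, Algebra.smul_def, map_one, one_mul]
  rw [Algebra.linearMap_apply, Algebra.smul_def] at hc
  rw [hc, mul_comm, inv_mul_cancel_left₀ ((map_ne_zero_iff _ (IsFractionRing.injective R K)).2 ha)]

noncomputable def quotSpanSingletonEquivDual {a : R} (ha : a ≠ 0) :
    (R ⧸ R ∙ a) ≃ₗ[R] ((R ⧸ R ∙ a) →ₗ[R] K ⧸ LinearMap.range (Algebra.linearMap R K)) :=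
  Submodule.quotEquivOfEq _ _
      (by ext r; exact (smul_divMod_eq_zero_iff ha r).symm) ≪≫ₗ
    (LinearMap.toSpanSingleton R _ (divMod K a)).quotKerEquivOfSurjective
      (fun f => exists_eq_smul_divMod ha f)

end TorsionDuality

section TorsionModules

universe u

variable {R : Type u} [CommRing R] [IsDomain R] [IsPrincipalIdealRing R]
    (N : Type*) [AddCommGroup N] [Module R N] [Module.Finite R N]

lemma exists_linearEquiv_pi_quotSpanSingleton (hN : Module.IsTorsion R N) :
    ∃ (ι : Type u) (_ : Fintype ι) (q : ι → R), (∀ i, q i ≠ 0) ∧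
      Nonempty (N ≃ₗ[R] Π i, R ⧸ R ∙ q i) := by
  obtain ⟨ι, _, p, hp, k, ⟨d⟩⟩ := Module.equiv_directSum_of_isTorsion hN
  exact ⟨ι, inferInstance, fun i => p i ^ k i, fun i => pow_ne_zero _ (hp i).ne_zero,
    ⟨d ≪≫ₗ DirectSum.linearEquivFunOnFintype R ι _⟩⟩

lemma isArtinian_of_isTorsion (hN : Module.IsTorsion R N) : IsArtinian R N := by
  obtain ⟨ι, _, q, hq, ⟨d⟩⟩ := exists_linearEquiv_pi_quotSpanSingleton N hN
  have (i : ι) : IsArtinian R (R ⧸ R ∙ q i) :=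
    (isFiniteLength_iff_isNoetherian_isArtinian.1
      (isFiniteLength_quotient_span_singleton R (mem_nonZeroDivisors_of_ne_zero (hq i)))).2
  exact isArtinian_of_linearEquiv d.symm

variable {K : Type*} [Field K] [Algebra R K] [IsFractionRing R K]

lemma nonempty_dual_linearEquiv_of_isTorsion (hN : Module.IsTorsion R N) :
    Nonempty ((N →ₗ[R] K ⧸ LinearMap.range (Algebra.linearMap R K)) ≃ₗ[R] N) := by
  classical
  obtain ⟨ι, _, q, hq, ⟨d⟩⟩ := exists_linearEquiv_pi_quotSpanSingleton N hN
  exact ⟨LinearEquiv.congrLeft _ R d ≪≫ₗ (LinearMap.lsum R _ R).symm ≪≫ₗ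
    LinearEquiv.piCongrRight (fun i => (quotSpanSingletonEquivDual (hq i)).symm) ≪≫ₗ d.symm⟩

variable {N₁ N₂ : Type*} [AddCommGroup N₁] [Module R N₁] [Module.Finite R N₁]
    [AddCommGroup N₂] [Module R N₂] [Module.Finite R N₂]
    {β : N₁ →ₗ[R] N₂ →ₗ[R] K ⧸ LinearMap.range (Algebra.linearMap R K)}

lemma surjective_flip_of_injective (h₁ : Module.IsTorsion R N₁) (h₂ : Module.IsTorsion R N₂)
    (hβ : Function.Injective β) (hβ' : Function.Injective β.flip) :
    Function.Surjective β.flip := by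
  have := isArtinian_of_isTorsion N₁ h₁
  obtain ⟨d₁⟩ := nonempty_dual_linearEquiv_of_isTorsion (K := K) N₁ h₁
  obtain ⟨d₂⟩ := nonempty_dual_linearEquiv_of_isTorsion (K := K) N₂ h₂
  have hsurj : Function.Surjective ((d₁ ∘ β.flip) ∘ (d₂ ∘ β)) :=
    (IsArtinian.bijective_of_injective_endomorphism
      (d₁.toLinearMap ∘ₗ β.flip ∘ₗ d₂.toLinearMap ∘ₗ β)
      (d₁.injective.comp (hβ'.comp (d₂.injective.comp hβ)))).2
  exact (EquivLike.comp_surjective _ d₁).1 hsurj.of_comp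

lemma bijective_of_injective_of_injective_flip (h₁ : Module.IsTorsion R N₁)
    (h₂ : Module.IsTorsion R N₂) (hβ : Function.Injective β) (hβ' : Function.Injective β.flip) :
    Function.Bijective β ∧ Function.Bijective β.flip :=
  ⟨⟨hβ, β.flip_flip ▸ surjective_flip_of_injective h₂ h₁ hβ' (β.flip_flip ▸ hβ)⟩,
    ⟨hβ', surjective_flip_of_injective h₁ h₂ hβ hβ'⟩⟩

end TorsionModules

section FittingIdeal

variable {R N N' : Type*} [CommRing R] [AddCommGroup N] [Module R N] [AddCommGroup N']
    [Module R N']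

lemma fittingIdeal_le_of_linearEquiv (f : N ≃ₗ[R] N') : fittingIdeal R N ≤ fittingIdeal R N' := by
  rw [fittingIdeal, Ideal.span_le]
  rintro r ⟨n, π, hπ, A, hA, rfl⟩
  exact Ideal.subset_span ⟨n, f.toLinearMap ∘ₗ π, f.surjective.comp hπ, A,
    fun j => by rw [LinearMap.comp_apply, hA j, map_zero], rfl⟩

lemma LinearEquiv.fittingIdeal_eq (f : N ≃ₗ[R] N') : fittingIdeal R N = fittingIdeal R N' :=
  le_antisymm (fittingIdeal_le_of_linearEquiv f) (fittingIdeal_le_of_linearEquiv f.symm)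

end FittingIdeal

noncomputable def Submodule.liftQ₂ {R A B C : Type*} [CommRing R] [AddCommGroup A] [Module R A]
    [AddCommGroup B] [Module R B] [AddCommGroup C] [Module R C]
    (p : Submodule R A) (q : Submodule R B) (f : A →ₗ[R] B →ₗ[R] C)
    (hp : ∀ a ∈ p, ∀ b, f a b = 0) (hq : ∀ a, ∀ b ∈ q, f a b = 0) :
    A ⧸ p →ₗ[R] B ⧸ q →ₗ[R] C :=
  p.liftQ (q.liftQ f.flip fun b hb => LinearMap.ext fun a => hq a b hb).flip
    fun a ha => q.linearMap_qext (LinearMap.ext fun b => hp a ha b)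

section CongruenceModule

variable {O TE M ME : Type*} [CommRing O] [CommRing TE] [Algebra O TE]
    [AddCommGroup M] [Module O M] [AddCommGroup ME] [Module O ME] [Module TE ME]
    [IsScalarTower O TE ME] (e : TE) (iota : M →ₗ[O] ME)

lemma eMsub_eq_range : eMsub e iota = LinearMap.range (e • iota) :=
  le_antisymm (Submodule.span_le.2 fun _ ⟨m, hm⟩ => ⟨m, hm.symm⟩)
    (fun _ ⟨m, hm⟩ => Submodule.subset_span ⟨m, hm.symm⟩)

lemma mem_eMsub {x : ME} : x ∈ eMsub e iota ↔ ∃ m, e • iota m = x := by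
  rw [eMsub_eq_range]; rfl

noncomputable def congruenceMk : M →ₗ[O] C0M e iota :=
  Submodule.mkQ _ ∘ₗ (e • iota).codRestrict _ fun m => (mem_eMsub e iota).2 ⟨m, rfl⟩

lemma congruenceMk_apply (m : M) : congruenceMk e iota m = clsM e iota m := rfl

lemma congruenceMk_surjective : Function.Surjective (congruenceMk e iota) := by
  refine (Submodule.mkQ_surjective _).comp fun ⟨x, hx⟩ => ?_
  obtain ⟨m, rfl⟩ := (mem_eMsub e iota).1 hx
  exact ⟨m, rfl⟩

lemma clsM_eq_zero_iff (m : M) : clsM e iota m = 0 ↔ e • iota m ∈ LinearMap.range iota :=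
  (Submodule.Quotient.mk_eq_zero _).trans (and_iff_right ((mem_eMsub e iota).2 ⟨m, rfl⟩))

lemma C0M.finite [Module.Finite O M] : Module.Finite O (C0M e iota) :=
  Module.Finite.of_surjective _ (congruenceMk_surjective e iota)

lemma C0M.isTorsion (s : nonZeroDivisors O)
    (hs : ∀ m, (s : O) • e • iota m ∈ LinearMap.range iota) :
    Module.IsTorsion O (C0M e iota) := by
  intro z
  obtain ⟨m, rfl⟩ := congruenceMk_surjective e iota z
  refine ⟨s, ?_⟩
  rw [Submonoid.smul_def, ← map_smul, congruenceMk_apply, clsM_eq_zero_iff, map_smul, smul_comm]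
  exact hs m

lemma exists_smul_mem_range_of_isLocalization {T : Type*} [CommRing T] [Algebra O T]
    [Algebra T TE] [IsScalarTower O T TE]
    [IsLocalization (Algebra.algebraMapSubmonoid T (nonZeroDivisors O)) TE] [Module T M]
    (hiota : ∀ (t : T) (m : M), iota (t • m) = algebraMap T TE t • iota m) :
    ∃ s : nonZeroDivisors O, ∀ m, (s : O) • e • iota m ∈ LinearMap.range iota := by
  obtain ⟨⟨t, ⟨_, s, hs, rfl⟩⟩, ht⟩ :=
    IsLocalization.surj (Algebra.algebraMapSubmonoid T (nonZeroDivisors O)) e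
  refine ⟨⟨s, hs⟩, fun m => ⟨t • m, ?_⟩⟩
  rw [hiota, ← ht, mul_comm, ← IsScalarTower.algebraMap_apply, mul_smul, algebraMap_smul]

end CongruenceModule

section CongruencePairing

variable {O E : Type*} [CommRing O] [Field E]
    {M₁ ME₁ : Type*} [AddCommGroup M₁] [Module O M₁] [AddCommGroup ME₁] [Module O ME₁]
    [Module E ME₁]
    {M₂ ME₂ : Type*} [AddCommGroup M₂] [Module O M₂] [AddCommGroup ME₂] [Module O ME₂]
    [Module E ME₂]
    {TE TE' : Type*} [CommRing TE] [Module TE ME₁] [CommRing TE'] [Module TE' ME₂]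
    (iota₁ : M₁ →ₗ[O] ME₁) (iota₂ : M₂ →ₗ[O] ME₂) (BE : ME₁ →ₗ[E] ME₂ →ₗ[E] E) (e : TE) (e' : TE')
    (horth₁ : ∀ (m : M₁) (m' : M₂), BE (e • iota₁ m) ((1 - e') • iota₂ m') = 0)
    (horth₂ : ∀ (m : M₁) (m' : M₂), BE ((1 - e) • iota₁ m) (e' • iota₂ m') = 0)

include horth₁ in
lemma pairing_smul_smul_eq_smul_left (m : M₁) (m' : M₂) :
    BE (e • iota₁ m) (e' • iota₂ m') = BE (e • iota₁ m) (iota₂ m') := by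
  have := horth₁ m m'
  rwa [sub_smul, one_smul, map_sub, sub_eq_zero, eq_comm] at this

include horth₂ in
lemma pairing_smul_smul_eq_smul_right (m : M₁) (m' : M₂) :
    BE (e • iota₁ m) (e' • iota₂ m') = BE (iota₁ m) (e' • iota₂ m') := by
  have := horth₂ m m'
  rwa [sub_smul, one_smul, map_sub, LinearMap.sub_apply, sub_eq_zero, eq_comm] at this

variable [Algebra O E] (B : M₁ →ₗ[O] M₂ →ₗ[O] O)
    (hBE : ∀ (m : M₁) (m' : M₂), BE (iota₁ m) (iota₂ m') = algebraMap O E (B m m'))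

variable [Algebra O TE] [IsScalarTower O TE ME₁] [Algebra O TE'] [IsScalarTower O TE' ME₂]

include hBE horth₁ in
lemma pairing_mem_of_mem_range_left {x : ME₁} {y : ME₂} (hx : x ∈ eMsub e iota₁)
    (hxM : x ∈ LinearMap.range iota₁) (hy : y ∈ eMsub e' iota₂) :
    BE x y ∈ LinearMap.range (Algebra.linearMap O E) := by
  obtain ⟨m, rfl⟩ := (mem_eMsub e iota₁).1 hx
  obtain ⟨m', rfl⟩ := (mem_eMsub e' iota₂).1 hy
  obtain ⟨m₀, hm₀⟩ := hxM
  rw [pairing_smul_smul_eq_smul_left iota₁ iota₂ BE e e' horth₁, ← hm₀, hBE]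
  exact ⟨B m₀ m', rfl⟩

include hBE horth₂ in
lemma pairing_mem_of_mem_range_right {x : ME₁} {y : ME₂} (hx : x ∈ eMsub e iota₁)
    (hy : y ∈ eMsub e' iota₂) (hyM : y ∈ LinearMap.range iota₂) :
    BE x y ∈ LinearMap.range (Algebra.linearMap O E) := by
  obtain ⟨m, rfl⟩ := (mem_eMsub e iota₁).1 hx
  obtain ⟨m', rfl⟩ := (mem_eMsub e' iota₂).1 hy
  obtain ⟨m₀', hm₀'⟩ := hyM
  rw [pairing_smul_smul_eq_smul_right iota₁ iota₂ BE e e' horth₂, ← hm₀', hBE]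
  exact ⟨B m m₀', rfl⟩

variable [IsScalarTower O E ME₁] [IsScalarTower O E ME₂]

include hBE in
lemma mem_range_of_forall_pairing_mem [IsFractionRing O E]
    [IsLocalizedModule (nonZeroDivisors O) iota₁] (hB : Function.Bijective B) {x : ME₁}
    (hx : ∀ m', BE x (iota₂ m') ∈ LinearMap.range (Algebra.linearMap O E)) :
    x ∈ LinearMap.range iota₁ := by
  have hinj : Function.Injective (Algebra.linearMap O E) := IsFractionRing.injective O E
  obtain ⟨⟨m, s⟩, hxm⟩ := IsLocalizedModule.surj (nonZeroDivisors O) iota₁ x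
  let φ : M₂ →ₗ[O] O := (LinearEquiv.ofInjective _ hinj).symm ∘ₗ
    ((BE x).restrictScalars O ∘ₗ iota₂).codRestrict _ hx
  have hφ (m' : M₂) : algebraMap O E (φ m') = BE x (iota₂ m') :=
    congrArg Subtype.val ((LinearEquiv.ofInjective _ hinj).apply_symm_apply _)
  obtain ⟨m₀, hm₀⟩ := hB.2 φ
  have hm : m = (s : O) • m₀ := hB.1 <| LinearMap.ext fun m' => hinj <| by
    simp only [Algebra.linearMap_apply, map_smul, hm₀, LinearMap.smul_apply, smul_eq_mul,
      map_mul, hφ, ← hBE, ← hxm, Submonoid.smul_def, ← algebraMap_smul E (s : O) x, map_smul,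
      LinearMap.smul_apply]
  have hs : algebraMap O E s ≠ 0 := (IsLocalization.map_units E s).ne_zero
  refine ⟨m₀, smul_right_injective ME₁ hs ?_⟩
  simp only [algebraMap_smul, ← map_smul, ← hm]
  exact hxm.symm

noncomputable def congruencePairing :
    C0M e iota₁ →ₗ[O] C0M e' iota₂ →ₗ[O] E ⧸ LinearMap.range (Algebra.linearMap O E) :=
  Submodule.liftQ₂ _ _
    (((BE.restrictScalars₁₂ O O).compl₁₂ (eMsub e iota₁).subtype
      (eMsub e' iota₂).subtype).compr₂ (Submodule.mkQ _))
    (fun x hx y => (Submodule.Quotient.mk_eq_zero _).2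
      (pairing_mem_of_mem_range_left iota₁ iota₂ BE e e' horth₁ B hBE x.2 hx.2 y.2))
    (fun x y hy => (Submodule.Quotient.mk_eq_zero _).2
      (pairing_mem_of_mem_range_right iota₁ iota₂ BE e e' horth₂ B hBE x.2 y.2 hy.2))

lemma congruencePairing_clsM (m : M₁) (m' : M₂) :
    congruencePairing iota₁ iota₂ BE e e' horth₁ horth₂ B hBE
        (clsM e iota₁ m) (clsM e' iota₂ m') =
      Submodule.Quotient.mk (BE (e • iota₁ m) (e' • iota₂ m')) := rfl

lemma congruencePairing_flip :
    (congruencePairing iota₁ iota₂ BE e e' horth₁ horth₂ B hBE).flip =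
      congruencePairing iota₂ iota₁ BE.flip e' e (fun m' m => horth₂ m m')
        (fun m' m => horth₁ m m') B.flip (fun m' m => hBE m m') := by
  refine LinearMap.ext fun z => LinearMap.ext fun w => ?_
  obtain ⟨m', rfl⟩ := congruenceMk_surjective e' iota₂ z
  obtain ⟨m, rfl⟩ := congruenceMk_surjective e iota₁ w
  rfl

lemma congruencePairing_injective [IsFractionRing O E]
    [IsLocalizedModule (nonZeroDivisors O) iota₁] (hB : Function.Bijective B) :
    Function.Injective (congruencePairing iota₁ iota₂ BE e e' horth₁ horth₂ B hBE) := by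
  refine (injective_iff_map_eq_zero _).2 fun z hz => ?_
  obtain ⟨m, rfl⟩ := congruenceMk_surjective e iota₁ z
  rw [congruenceMk_apply, clsM_eq_zero_iff]
  refine mem_range_of_forall_pairing_mem iota₁ iota₂ BE B hBE hB fun m' => ?_
  rw [← pairing_smul_smul_eq_smul_left iota₁ iota₂ BE e e' horth₁, ← Submodule.Quotient.mk_eq_zero,
    ← congruencePairing_clsM iota₁ iota₂ BE e e' horth₁ horth₂ B hBE, ← congruenceMk_apply, hz,
    LinearMap.zero_apply]

end CongruencePairing

theorem statement10_general
    {O : Type*} [CommRing O] [IsDomain O] [IsDiscreteValuationRing O]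
    {E : Type*} [Field E] [Algebra O E] [IsFractionRing O E]
    {T : Type*} [CommRing T] [Algebra O T] [Module.Finite O T]
    {TE : Type*} [CommRing TE] [Algebra T TE] [Algebra O TE] [IsScalarTower O T TE]
    [IsLocalization (Algebra.algebraMapSubmonoid T (nonZeroDivisors O)) TE] (e : TE)
    {T' : Type*} [CommRing T'] [Algebra O T'] [Module.Finite O T']
    {TE' : Type*} [CommRing TE'] [Algebra T' TE'] [Algebra O TE'] [IsScalarTower O T' TE']
    [IsLocalization (Algebra.algebraMapSubmonoid T' (nonZeroDivisors O)) TE'] (e' : TE')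
    {M₁ : Type*} [AddCommGroup M₁] [Module O M₁] [Module T M₁] [IsScalarTower O T M₁]
    [Module.Finite T M₁]
    {ME₁ : Type*} [AddCommGroup ME₁] [Module O ME₁] [Module E ME₁] [Module TE ME₁]
    [IsScalarTower O TE ME₁] [IsScalarTower O E ME₁]
    (iota₁ : M₁ →ₗ[O] ME₁) [IsLocalizedModule (nonZeroDivisors O) iota₁]
    (hiota₁ : ∀ (t : T) (m : M₁), iota₁ (t • m) = algebraMap T TE t • iota₁ m)
    {M₂ : Type*} [AddCommGroup M₂] [Module O M₂] [Module T' M₂] [IsScalarTower O T' M₂]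
    [Module.Finite T' M₂]
    {ME₂ : Type*} [AddCommGroup ME₂] [Module O ME₂] [Module E ME₂] [Module TE' ME₂]
    [IsScalarTower O TE' ME₂] [IsScalarTower O E ME₂]
    (iota₂ : M₂ →ₗ[O] ME₂) [IsLocalizedModule (nonZeroDivisors O) iota₂]
    (hiota₂ : ∀ (t : T') (m : M₂), iota₂ (t • m) = algebraMap T' TE' t • iota₂ m)
    (B : M₁ →ₗ[O] M₂ →ₗ[O] O)
    (hB : Function.Bijective B) (hBf : Function.Bijective B.flip)
    (BE : ME₁ →ₗ[E] ME₂ →ₗ[E] E)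
    (hBE : ∀ (m : M₁) (m' : M₂), BE (iota₁ m) (iota₂ m') = algebraMap O E (B m m'))
    (horth₁ : ∀ (m : M₁) (m' : M₂), BE (e • iota₁ m) ((1 - e') • iota₂ m') = 0)
    (horth₂ : ∀ (m : M₁) (m' : M₂), BE ((1 - e) • iota₁ m) (e' • iota₂ m') = 0) :
    ∃ Bbar : (C0M e iota₁) →ₗ[O] (C0M e' iota₂) →ₗ[O]
        (E ⧸ LinearMap.range (Algebra.linearMap O E)),
      (∀ (m : M₁) (m' : M₂), Bbar (clsM e iota₁ m) (clsM e' iota₂ m') =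
        Submodule.Quotient.mk (BE (e • iota₁ m) (e' • iota₂ m'))) ∧
      Function.Bijective Bbar ∧ Function.Bijective Bbar.flip ∧
      fittingIdeal O (C0M e iota₁) = fittingIdeal O (C0M e' iota₂) := by
  have : Module.Finite O M₁ := .trans T M₁
  have : Module.Finite O M₂ := .trans T' M₂
  have := C0M.finite e iota₁
  have := C0M.finite e' iota₂
  obtain ⟨s₁, hs₁⟩ := exists_smul_mem_range_of_isLocalization e iota₁ hiota₁
  obtain ⟨s₂, hs₂⟩ := exists_smul_mem_range_of_isLocalization e' iota₂ hiota₂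
  have htors₁ := C0M.isTorsion e iota₁ s₁ hs₁
  have htors₂ := C0M.isTorsion e' iota₂ s₂ hs₂
  set Bbar := congruencePairing iota₁ iota₂ BE e e' horth₁ horth₂ B hBE
  have hinj : Function.Injective Bbar := congruencePairing_injective _ _ _ _ _ _ _ _ _ hB
  have hinj' : Function.Injective Bbar.flip := by
    rw [congruencePairing_flip]
    exact congruencePairing_injective _ _ _ _ _ _ _ _ _ hBf
  obtain ⟨hbij, hbij'⟩ := bijective_of_injective_of_injective_flip htors₁ htors₂ hinj hinj'
  obtain ⟨d⟩ := nonempty_dual_linearEquiv_of_isTorsion (K := E) _ htors₂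
  exact ⟨Bbar, congruencePairing_clsM _ _ _ _ _ _ _ _ _, hbij, hbij',
    ((LinearEquiv.ofBijective Bbar hbij).trans d).fittingIdeal_eq⟩

/-- `𝒪` is a complete DVR with fraction field `E`; `T` and `T̃` are
commutative reduced finite flat local `𝒪`-algebras with `𝒪`-algebra homomorphisms
`λ, λ̃` to `𝒪` and attached idempotents `e ∈ T_E`, `ẽ ∈ T̃_E`; `M₁`, `M₂` are finitely
generated modules over `T`, `T̃` respectively, free over `𝒪`, with a perfect `𝒪`-bilinear
pairing `[·,·] : M₁ × M₂ → 𝒪` whose `E`-bilinear extension satisfies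
`[eM₁, (1−ẽ)M₂] = 0 = [(1−e)M₁, ẽM₂]`.  Then `[·,·]` induces a well-defined perfect
pairing `C₀^λ(M₁) × C₀^{λ̃}(M₂) → E/𝒪` on the congruence modules, given on classes by
`(e·m₁, ẽ·m₂) ↦ [e·m₁, ẽ·m₂] mod 𝒪`; consequently `η_λ(M₁) = η_{λ̃}(M₂)`. -/
theorem statement10
    {O : Type*} [CommRing O] [IsDomain O] [IsDiscreteValuationRing O]
    [IsAdicComplete (IsLocalRing.maximalIdeal O) O]
    {E : Type*} [Field E] [Algebra O E] [IsFractionRing O E]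
    {T : Type*} [CommRing T] [IsReduced T] [IsLocalRing T]
    [Algebra O T] [Module.Finite O T] [Module.Flat O T]
    (lam : T →ₐ[O] O)
    {TE : Type*} [CommRing TE] [Algebra T TE] [Algebra O TE] [Algebra E TE]
    [IsScalarTower O T TE] [IsScalarTower O E TE]
    [IsLocalization (Algebra.algebraMapSubmonoid T (nonZeroDivisors O)) TE]
    (lamE : TE →ₐ[E] E) (e : TE)
    (hlamE : ∀ t : T, lamE (algebraMap T TE t) = algebraMap O E (lam t))
    (he1 : lamE e = 1)
    (he2 : ∀ P : Ideal TE, P.IsPrime → P ≠ RingHom.ker lamE → e ∈ P)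
    {T' : Type*} [CommRing T'] [IsReduced T'] [IsLocalRing T']
    [Algebra O T'] [Module.Finite O T'] [Module.Flat O T']
    (lam' : T' →ₐ[O] O)
    {TE' : Type*} [CommRing TE'] [Algebra T' TE'] [Algebra O TE'] [Algebra E TE']
    [IsScalarTower O T' TE'] [IsScalarTower O E TE']
    [IsLocalization (Algebra.algebraMapSubmonoid T' (nonZeroDivisors O)) TE']
    (lamE' : TE' →ₐ[E] E) (e' : TE')
    (hlamE' : ∀ t : T', lamE' (algebraMap T' TE' t) = algebraMap O E (lam' t))
    (he1' : lamE' e' = 1)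
    (he2' : ∀ P : Ideal TE', P.IsPrime → P ≠ RingHom.ker lamE' → e' ∈ P)
    {M₁ : Type*} [AddCommGroup M₁] [Module O M₁] [Module T M₁] [IsScalarTower O T M₁]
    [Module.Finite T M₁] [Module.Free O M₁]
    {ME₁ : Type*} [AddCommGroup ME₁] [Module O ME₁] [Module E ME₁] [Module TE ME₁]
    [IsScalarTower O TE ME₁] [IsScalarTower O E ME₁] [IsScalarTower E TE ME₁]
    (iota₁ : M₁ →ₗ[O] ME₁) [IsLocalizedModule (nonZeroDivisors O) iota₁]
    (hiota₁ : ∀ (t : T) (m : M₁), iota₁ (t • m) = algebraMap T TE t • iota₁ m)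
    {M₂ : Type*} [AddCommGroup M₂] [Module O M₂] [Module T' M₂] [IsScalarTower O T' M₂]
    [Module.Finite T' M₂] [Module.Free O M₂]
    {ME₂ : Type*} [AddCommGroup ME₂] [Module O ME₂] [Module E ME₂] [Module TE' ME₂]
    [IsScalarTower O TE' ME₂] [IsScalarTower O E ME₂] [IsScalarTower E TE' ME₂]
    (iota₂ : M₂ →ₗ[O] ME₂) [IsLocalizedModule (nonZeroDivisors O) iota₂]
    (hiota₂ : ∀ (t : T') (m : M₂), iota₂ (t • m) = algebraMap T' TE' t • iota₂ m)
    (B : M₁ →ₗ[O] M₂ →ₗ[O] O)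
    (hB : Function.Bijective B) (hBf : Function.Bijective B.flip)
    (BE : ME₁ →ₗ[E] ME₂ →ₗ[E] E)
    (hBE : ∀ (m : M₁) (m' : M₂), BE (iota₁ m) (iota₂ m') = algebraMap O E (B m m'))
    (horth₁ : ∀ (m : M₁) (m' : M₂), BE (e • iota₁ m) ((1 - e') • iota₂ m') = 0)
    (horth₂ : ∀ (m : M₁) (m' : M₂), BE ((1 - e) • iota₁ m) (e' • iota₂ m') = 0) :
    ∃ Bbar : (C0M e iota₁) →ₗ[O] (C0M e' iota₂) →ₗ[O]
        (E ⧸ LinearMap.range (Algebra.linearMap O E)),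
      (∀ (m : M₁) (m' : M₂), Bbar (clsM e iota₁ m) (clsM e' iota₂ m') =
        Submodule.Quotient.mk (BE (e • iota₁ m) (e' • iota₂ m'))) ∧
      Function.Bijective Bbar ∧ Function.Bijective Bbar.flip ∧
      fittingIdeal O (C0M e iota₁) = fittingIdeal O (C0M e' iota₂) :=
  statement10_general e e' iota₁ hiota₁ iota₂ hiota₂ B hB hBf BE hBE horth₁ horth₂
end

section
/- Let A be a commutative ring, θ : A → A a ring automorphism, k a field, and M, N finite-dimensional k-vector spaces, each equipped with an action of A by k-linear endomorphisms. Let B : M × N → k be a k-bilinear pairing satisfying B(t·m, n) = B(m, θ(t)·n) for all t ∈ A, m ∈ M, n ∈ N. Let 𝔪₁ and 𝔪₂ be maximal ideals of A with 𝔪₁·M = 0 and 𝔪₂·N = 0. If B is not identically zero, then 𝔪₂ = θ(𝔪₁). -/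
/-- Let `A` be a commutative ring, `θ : A → A` a ring automorphism,
`k` a field, and `M`, `N` finite-dimensional `k`-vector spaces with `A` acting by
`k`-linear endomorphisms via `φM`, `φN`.  Let `B : M × N → k` be `k`-bilinear with
`B(t·m, n) = B(m, θ(t)·n)`.  If `𝔪₁, 𝔪₂` are maximal ideals of `A` with `𝔪₁·M = 0` and
`𝔪₂·N = 0`, and `B` is not identically zero, then `𝔪₂ = θ(𝔪₁)`. -/
theorem statement16
    (A : Type*) [CommRing A] (θ : A ≃+* A)
    (k : Type*) [Field k]
    (M N : Type*) [AddCommGroup M] [Module k M] [FiniteDimensional k M]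
    [AddCommGroup N] [Module k N] [FiniteDimensional k N]
    (φM : A →+* Module.End k M) (φN : A →+* Module.End k N)
    (B : M →ₗ[k] N →ₗ[k] k)
    (hB : ∀ (t : A) (m : M) (n : N), B (φM t m) n = B m (φN (θ t) n))
    (𝔪₁ 𝔪₂ : Ideal A) (h𝔪₁ : 𝔪₁.IsMaximal) (h𝔪₂ : 𝔪₂.IsMaximal)
    (hM : ∀ t ∈ 𝔪₁, φM t = 0) (hN : ∀ t ∈ 𝔪₂, φN t = 0)
    (hBne : ∃ (m : M) (n : N), B m n ≠ 0) :
    𝔪₂ = Ideal.map (θ : A →+* A) 𝔪₁ := by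
  obtain ⟨m, n, hmn⟩ := hBne
  by_contra hne
  have hmax : (Ideal.map (θ : A →+* A) 𝔪₁).IsMaximal :=
    Ideal.map_isMaximal_of_equiv θ
  have hsup : 𝔪₂ ⊔ Ideal.map (θ : A →+* A) 𝔪₁ = ⊤ :=
    Ideal.IsMaximal.coprime_of_ne h𝔪₂ hmax hne
  have h1 : (1 : A) ∈ 𝔪₂ ⊔ Ideal.map (θ : A →+* A) 𝔪₁ := hsup ▸ Submodule.mem_top
  obtain ⟨s, hs, u, hu, hsu⟩ := Submodule.mem_sup.mp h1
  obtain ⟨t, ht, huθ⟩ := (Ideal.mem_map_iff_of_surjective (θ : A →+* A) θ.surjective).mp hu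
  apply hmn
  have : B m n = B m (φN (1 : A) n) := by simp
  rw [this, ← hsu, map_add]
  simp only [LinearMap.add_apply, map_add]
  have h2 : (B m) ((φN (θ t)) n) = 0 := by rw [← hB, hM t ht]; simp
  rw [hN s hs]
  simpa [← huθ] using h2
end
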